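/- Let n > 2. The dihedral group Dih(n) of order 2n belongs to 𝔜 if and only if n = 4 or n is odd. -/

import Mathlib

/-- A group `G` belongs to the class 𝔜 if every non-abelian subgroup of `G`
is self-normalized. -/
def IsY (G : Type*) [Group G] : Prop :=
  ∀ H : Subgroup G, (∃ a ∈ H, ∃ b ∈ H, a * b ≠ b * a) → Subgroup.normalizer (H : Set G) = H

/-!
A non-abelian subgroup `H` of `Dih(n)` contains a reflection `sr j`, and conjugating `sr j` by an
element `g` of the normaliser shows that `r (2 t)` (for `g = r t`) or `r (2 (t - j))`
(for `g = sr t`) lies in `H`. So `H` is self-normalised as soon as its rotation subgroup is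
closed under halving. That holds when `n` is odd, where `2` is invertible mod `n`, and when
`n = 4`, where non-commutativity forces a rotation of order `4`, hence every rotation, into `H`.
Conversely, for `n` even the "even" elements `r (2m)`, `sr (2m)` form the kernel of a parity
homomorphism onto `ℤ/2`; it is normal and proper, and it is non-abelian unless `n ∣ 4`.
-/

theorem IsY.eq_top_of_normal {G : Type*} [Group G] (hY : IsY G) {H : Subgroup G} [H.Normal]
    (hH : ∃ a ∈ H, ∃ b ∈ H, a * b ≠ b * a) : H = ⊤ :=
  (hY H hH).symm.trans (Subgroup.normalizer_eq_top H)

namespace ZMod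

variable {n : ℕ}

theorem mul_mem_addSubgroup (K : AddSubgroup (ZMod n)) (c : ZMod n) {y : ZMod n} (hy : y ∈ K) :
    c * y ∈ K := by
  rw [← intCast_zmod_cast c, ← zsmul_eq_mul]
  exact K.zsmul_mem hy _

theorem mem_addSubgroup_of_two_mul_mem (hn : Odd n) (K : AddSubgroup (ZMod n)) {x : ZMod n}
    (hx : 2 * x ∈ K) : x ∈ K := by
  have h2 : (2 : ZMod n) * 2⁻¹ = 1 := by
    exact_mod_cast coe_mul_inv_eq_one 2 (Nat.coprime_two_left.mpr hn)
  simpa [← mul_assoc, mul_comm _ (2 : ZMod n), h2] using mul_mem_addSubgroup K 2⁻¹ hx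

theorem addSubgroup_four_eq_top {K : AddSubgroup (ZMod 4)} {k : ZMod 4} (hk : k ∈ K)
    (h2k : 2 * k ≠ 0) : K = ⊤ := by
  have hkk : ∀ a : ZMod 4, 2 * a ≠ 0 → a * a = 1 := by decide
  refine (AddSubgroup.eq_top_iff' K).mpr fun x => ?_
  simpa [mul_assoc, hkk k h2k] using mul_mem_addSubgroup K (x * k) hk

end ZMod

namespace DihedralGroup

variable {n : ℕ}

def rotations (H : Subgroup (DihedralGroup n)) : AddSubgroup (ZMod n) where
  carrier := {k | r k ∈ H}
  zero_mem' := H.one_mem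
  add_mem' hp hq := by simpa only [Set.mem_ofPred_eq, r_mul_r] using H.mul_mem hp hq
  neg_mem' hp := by simpa only [Set.mem_ofPred_eq, inv_r] using H.inv_mem hp

@[simp]
theorem mem_rotations {H : Subgroup (DihedralGroup n)} {k : ZMod n} :
    k ∈ rotations H ↔ r k ∈ H :=
  Iff.rfl

theorem r_conj_sr (t j : ZMod n) : r t * sr j * (r t)⁻¹ = sr (j - 2 * t) := by
  rw [inv_r, r_mul_sr, sr_mul_r]
  ring_nf

theorem sr_conj_sr (t j : ZMod n) : sr t * sr j * (sr t)⁻¹ = sr (2 * t - j) := by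
  rw [inv_sr, sr_mul_sr, r_mul_sr]
  ring_nf

theorem exists_sr_mem_and_rotation_of_noncomm {H : Subgroup (DihedralGroup n)}
    (hH : ∃ a ∈ H, ∃ b ∈ H, a * b ≠ b * a) :
    (∃ j, sr j ∈ H) ∧ ∃ k ∈ rotations H, 2 * k ≠ 0 := by
  obtain ⟨a, ha, b, hb, hab⟩ := hH
  rcases a with i | i <;> rcases b with j | j
  · exact absurd (by rw [r_mul_r, r_mul_r, add_comm]) hab
  · refine ⟨⟨j, hb⟩, i, ha, fun h2 => hab ?_⟩
    rw [r_mul_sr, sr_mul_r]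
    congr 1
    linear_combination -h2
  · refine ⟨⟨i, ha⟩, j, hb, fun h2 => hab ?_⟩
    rw [r_mul_sr, sr_mul_r]
    congr 1
    linear_combination h2
  · refine ⟨⟨i, ha⟩, j - i, by simpa [sr_mul_sr] using H.mul_mem ha hb, fun h2 => hab ?_⟩
    rw [sr_mul_sr, sr_mul_sr]
    congr 1
    linear_combination h2

theorem normalizer_eq_self_of_sr_mem {H : Subgroup (DihedralGroup n)} {j : ZMod n}
    (hj : sr j ∈ H) (hhalf : ∀ x, 2 * x ∈ rotations H → x ∈ rotations H) :
    Subgroup.normalizer (H : Set (DihedralGroup n)) = H := by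
  refine le_antisymm (fun g hg => ?_) Subgroup.le_normalizer
  have hconj := (Subgroup.mem_normalizer_iff.mp hg (sr j)).mp hj
  rcases g with t | t
  · rw [r_conj_sr] at hconj
    have h2t : r (2 * t) ∈ H := by
      simpa [sr_mul_sr] using H.mul_mem hconj hj
    exact hhalf t h2t
  · rw [sr_conj_sr] at hconj
    have h2t : r (2 * (t - j)) ∈ H := by
      convert H.mul_mem hj hconj using 1
      rw [sr_mul_sr]
      ring_nf
    simpa [sr_mul_r] using H.mul_mem hj (hhalf _ h2t)

def parity (h : 2 ∣ n) : DihedralGroup n →* Multiplicative (ZMod 2) where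
  toFun
    | r i => .ofAdd (ZMod.castHom h (ZMod 2) i)
    | sr i => .ofAdd (ZMod.castHom h (ZMod 2) i)
  map_one' := by rw [one_def]; simp only [map_zero, ofAdd_zero]
  map_mul' := by
    rintro (i | i) (j | j) <;>
      simp only [r_mul_r, r_mul_sr, sr_mul_r, sr_mul_sr, map_add, map_sub, CharTwo.sub_eq_add,
        ofAdd_add, add_comm]

theorem r_mem_ker_parity_iff (h : 2 ∣ n) (i : ZMod n) :
    r i ∈ (parity h).ker ↔ ZMod.castHom h (ZMod 2) i = 0 :=
  ofAdd_eq_one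

theorem sr_mem_ker_parity_iff (h : 2 ∣ n) (i : ZMod n) :
    sr i ∈ (parity h).ker ↔ ZMod.castHom h (ZMod 2) i = 0 :=
  ofAdd_eq_one

theorem not_isY_of_two_dvd (h : 2 ∣ n) (h4 : ¬ n ∣ 4) : ¬ IsY (DihedralGroup n) := by
  intro hY
  have hr1 : r 1 ∉ (parity h).ker := by rw [r_mem_ker_parity_iff, map_one]; decide
  have hr2 : r 2 ∈ (parity h).ker := by rw [r_mem_ker_parity_iff, map_ofNat]; decide
  have hsr0 : sr 0 ∈ (parity h).ker := by rw [sr_mem_ker_parity_iff, map_zero]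
  have hnc : r 2 * sr 0 ≠ sr 0 * r (2 : ZMod n) := by
    rw [r_mul_sr, sr_mul_r, Ne, sr.injEq]
    intro h22
    have : ((4 : ℕ) : ZMod n) = 0 := by push_cast; linear_combination -h22
    exact h4 ((ZMod.natCast_eq_zero_iff _ _).mp this)
  exact hr1 (hY.eq_top_of_normal ⟨_, hr2, _, hsr0, hnc⟩ ▸ Subgroup.mem_top _)

end DihedralGroup

theorem stmt_14 (n : ℕ) (hn : 2 < n) :
    IsY (DihedralGroup n) ↔ n = 4 ∨ Odd n := by
  refine ⟨fun hY => ?_, fun hn4 H hH => ?_⟩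
  · by_contra! h
    obtain ⟨hne4, hodd⟩ := h
    have heven : Even n := Nat.not_odd_iff_even.mp hodd
    refine DihedralGroup.not_isY_of_two_dvd heven.two_dvd (fun hdvd => hne4 ?_) hY
    have := Nat.le_of_dvd (by norm_num) hdvd
    obtain ⟨m, rfl⟩ := heven
    omega
  · obtain ⟨⟨j, hj⟩, k, hk, h2k⟩ := DihedralGroup.exists_sr_mem_and_rotation_of_noncomm hH
    refine DihedralGroup.normalizer_eq_self_of_sr_mem hj fun x hx => ?_
    rcases hn4 with rfl | hodd
    · rw [ZMod.addSubgroup_four_eq_top hk h2k]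
      trivial
    · exact ZMod.mem_addSubgroup_of_two_mul_mem hodd _ hx
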